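/- arXiv:1911.09926 — 8 statements merged into one kernel-verified Lean document; each statement's English description precedes it below -/
import Mathlib

section
/- Under conditions (i) the map α: C → Hom(A/C, N), c ↦ ([a] ↦ (a,c)), is a group isomorphism, and (ii) the natural restriction map Hom(A/(B+C), N) → Hom(A'/(B+C), N) is surjective, the following holds. Let F¹ be the image of B^⊥ ∩ C in B^⊥/B and F² the image of A'^⊥ ∩ C in B^⊥/B. Then F² ⊆ F¹, the quotient (B^⊥/B)/F¹ is isomorphic to the image of the natural map B^⊥ → A'/(B+C), the quotient F¹/F² is isomorphic to Hom(A'/(B+C), N), and F² is isomorphic to the cokernel of β. -/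
/-!
Since the pairing is symmetric or antisymmetric, orthogonality is a symmetric relation. Each
isomorphism then comes from two surjections out of one group with the same kernel:
`B^⊥ ↠ (B^⊥/B)/F¹` and `B^⊥ ↠ im(B^⊥ → A'/(B+C))`, both with kernel `B^⊥ ∩ (B + C)`;
`B^⊥ ∩ C ↠ F¹/F²` and `c ↦ (·, c) : B^⊥ ∩ C ↠ Hom(A'/(B+C), N)`, onto by (i) and (ii),
both with kernel `A'^⊥ ∩ C` (by the modular law, as `B ∩ C ⊆ A'^⊥`);
`A'^⊥ ∩ C ↠ F²` and `A'^⊥ ∩ C ↠ coker β`, onto by surjectivity of `α`, both with kernel `B ∩ C`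
by injectivity of `α`.
-/

namespace OrthPairing

variable {A N : Type*} [AddCommGroup A] [AddCommGroup N]

/-- The orthogonal `E^⊥ = {a ∈ A | (a, e) = 0 for all e ∈ E}` of a subgroup `E` of `A`
with respect to a bilinear pairing `b : A × A → N`. -/
def orth (b : A →+ A →+ N) (E : AddSubgroup A) : AddSubgroup A where
  carrier := {a : A | ∀ e ∈ E, b a e = 0}
  zero_mem' := by intro e he; simp
  add_mem' := by
    intro x y hx hy e he
    simp [hx e he, hy e he]
  neg_mem' := by
    intro x hx e he
    simp [hx e he]

/-- The map `C → Hom(A/D, N)`, `c ↦ ([a] ↦ (a, c))`, defined whenever `(x, c) = 0`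
for all `x ∈ D` and `c ∈ C`. -/
def mapToHom (b : A →+ A →+ N) (C D : AddSubgroup A)
    (h : ∀ c ∈ C, ∀ x ∈ D, b x c = 0) : ↥C →+ (A ⧸ D) →+ N where
  toFun c := QuotientAddGroup.lift D (b.flip (c : A)) (fun x hx => h c c.2 x hx)
  map_zero' := AddMonoidHom.ext fun q =>
    QuotientAddGroup.induction_on q (fun a => by simp)
  map_add' x y := AddMonoidHom.ext fun q =>
    QuotientAddGroup.induction_on q (fun a => by simp; rfl)

/-- `F¹`: the image of `B^⊥ ∩ C` in `B^⊥/B`. -/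
def Fone (b : A →+ A →+ N) (B C : AddSubgroup A) :
    AddSubgroup (↥(orth b B) ⧸ B.addSubgroupOf (orth b B)) :=
  AddSubgroup.map (QuotientAddGroup.mk' (B.addSubgroupOf (orth b B)))
    ((orth b B ⊓ C).addSubgroupOf (orth b B))

/-- `F²`: the image of `A'^⊥ ∩ C` in `B^⊥/B`, where `A' = (B ∩ C)^⊥`. -/
def Ftwo (b : A →+ A →+ N) (B C : AddSubgroup A) :
    AddSubgroup (↥(orth b B) ⧸ B.addSubgroupOf (orth b B)) :=
  AddSubgroup.map (QuotientAddGroup.mk' (B.addSubgroupOf (orth b B)))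
    ((orth b (orth b (B ⊓ C)) ⊓ C).addSubgroupOf (orth b B))

/-- The natural map `B^⊥ → A'/(B+C)` (recall `B^⊥ ⊆ A' = (B ∩ C)^⊥`). -/
def natMap (b : A →+ A →+ N) (B C : AddSubgroup A) :
    ↥(orth b B) →+ ↥(orth b (B ⊓ C)) ⧸ (B ⊔ C).addSubgroupOf (orth b (B ⊓ C)) :=
  (QuotientAddGroup.mk' ((B ⊔ C).addSubgroupOf (orth b (B ⊓ C)))).comp
    (AddSubgroup.inclusion (fun x hx e he => hx e he.1))

theorem nonempty_addEquiv_of_surjective {G H K : Type*} [AddCommGroup G] [AddCommGroup H]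
    [AddCommGroup K] (f : G →+ H) (g : G →+ K) (hf : Function.Surjective f)
    (hg : Function.Surjective g) (hfg : ∀ x, f x = 0 ↔ g x = 0) : Nonempty (H ≃+ K) :=
  ⟨(QuotientAddGroup.quotientKerEquivOfSurjective f hf).symm.trans <|
    (QuotientAddGroup.quotientAddEquivOfEq (AddSubgroup.ext hfg)).trans <|
      QuotientAddGroup.quotientKerEquivOfSurjective g hg⟩

section ImageInQuotient

variable {H K S : AddSubgroup A}

theorem mk_eq_zero_iff (x : K) : (x : K ⧸ H.addSubgroupOf K) = 0 ↔ (x : A) ∈ H :=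
  (QuotientAddGroup.eq_zero_iff x).trans AddSubgroup.mem_addSubgroupOf

theorem mk_mem_map_addSubgroupOf_iff (hHK : H ≤ K) (x : K) :
    (x : K ⧸ H.addSubgroupOf K) ∈ (S.addSubgroupOf K).map (QuotientAddGroup.mk' _) ↔
      (x : A) ∈ S ⊔ H := by
  constructor
  · rintro ⟨y, hy, hyx⟩
    have hxy : -(y : A) + x ∈ H := AddSubgroup.mem_addSubgroupOf.mp (QuotientAddGroup.eq.mp hyx)
    simpa using add_mem (AddSubgroup.mem_sup_left (AddSubgroup.mem_addSubgroupOf.mp hy))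
      (AddSubgroup.mem_sup_right hxy : -(y : A) + x ∈ S ⊔ H)
  · intro hx
    obtain ⟨s, hs, h, hh, hsh⟩ := AddSubgroup.mem_sup.mp hx
    have hs_eq : s = x - h := eq_sub_of_add_eq hsh
    refine ⟨⟨s, hs_eq ▸ sub_mem x.2 (hHK hh)⟩, AddSubgroup.mem_addSubgroupOf.mpr hs,
      QuotientAddGroup.eq.mpr (AddSubgroup.mem_addSubgroupOf.mpr ?_)⟩
    simpa [hs_eq] using hh

def toImage (H : AddSubgroup A) (hSK : S ≤ K) :
    S →+ (S.addSubgroupOf K).map (QuotientAddGroup.mk' (H.addSubgroupOf K)) :=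
  ((QuotientAddGroup.mk' _).comp (AddSubgroup.inclusion hSK)).codRestrict _
    fun x => ⟨AddSubgroup.inclusion hSK x, AddSubgroup.mem_addSubgroupOf.mpr x.2, rfl⟩

theorem toImage_surjective (hSK : S ≤ K) : Function.Surjective (toImage H hSK) := by
  rintro ⟨_, x, hx, rfl⟩
  exact ⟨⟨x, AddSubgroup.mem_addSubgroupOf.mp hx⟩, rfl⟩

theorem toImage_eq_zero_iff (hSK : S ≤ K) (x : S) : toImage H hSK x = 0 ↔ (x : A) ∈ H :=
  Subtype.ext_iff.trans (mk_eq_zero_iff _)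

end ImageInQuotient

variable {b : A →+ A →+ N}

theorem orth_antitone {E F : AddSubgroup A} (h : E ≤ F) : orth b F ≤ orth b E :=
  fun _ hx e he => hx e (h he)

theorem eq_zero_comm_of_symm_or_antisymm
    (hsym : (∀ x y : A, b x y = b y x) ∨ (∀ x y : A, b x y = - b y x)) {x y : A}
    (h : b x y = 0) : b y x = 0 := by
  rcases hsym with hs | hs <;> simp [hs y x, h]

theorem le_orth_orth (hrefl : ∀ x y, b x y = 0 → b y x = 0) (E : AddSubgroup A) :
    E ≤ orth b (orth b E) :=
  fun x hx _ he => hrefl _ _ (he x hx)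

section Nondegenerate

variable {C : AddSubgroup A} {hCC : ∀ c ∈ C, ∀ x ∈ C, b x c = 0}

theorem exists_mem_orth_pairing_eq (hrefl : ∀ x y, b x y = 0 → b y x = 0)
    (hα : Function.Surjective (mapToHom b C C hCC)) {D : AddSubgroup A} (hCD : C ≤ D)
    (g : A ⧸ D →+ N) : ∃ c ∈ orth b D ⊓ C, ∀ a : A, b a c = g a := by
  obtain ⟨c, hc⟩ := hα (g.comp (QuotientAddGroup.map C D (AddMonoidHom.id A) hCD))
  have hcg (a : A) : b a c = g a := DFunLike.congr_fun hc (a : A ⧸ C)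
  refine ⟨c, ⟨fun e he => hrefl _ _ ?_, c.2⟩, hcg⟩
  rw [hcg, (QuotientAddGroup.eq_zero_iff e).mpr he, map_zero]

theorem mapToHom_surjective (hrefl : ∀ x y, b x y = 0 → b y x = 0)
    (hα : Function.Surjective (mapToHom b C C hCC)) {S D : AddSubgroup A} (hCD : C ≤ D)
    (hS : orth b D ⊓ C ≤ S) (h : ∀ c ∈ S, ∀ x ∈ D, b x c = 0) :
    Function.Surjective (mapToHom b S D h) := by
  intro g
  obtain ⟨c, hc, hcg⟩ := exists_mem_orth_pairing_eq hrefl hα hCD g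
  exact ⟨⟨c, hS hc⟩, AddMonoidHom.ext fun q => QuotientAddGroup.induction_on q hcg⟩

theorem mapToHom_mem_range_iff (hα : Function.Injective (mapToHom b C C hCC))
    {S E D : AddSubgroup A} (hSC : S ≤ C) (hEC : E ≤ C) (hS : ∀ c ∈ S, ∀ x ∈ D, b x c = 0)
    (hE : ∀ c ∈ E, ∀ x ∈ D, b x c = 0) (x : S) :
    mapToHom b S D hS x ∈ (mapToHom b E D hE).range ↔ (x : A) ∈ E := by
  constructor
  · rintro ⟨e, he⟩
    have hxe : (⟨x, hSC x.2⟩ : C) = ⟨e, hEC e.2⟩ := hα <| AddMonoidHom.ext fun q =>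
      QuotientAddGroup.induction_on q fun a => (DFunLike.congr_fun he (a : A ⧸ D)).symm
    exact (congrArg Subtype.val hxe) ▸ e.2
  · exact fun hx => ⟨⟨x, hx⟩, rfl⟩

end Nondegenerate

section Filtration

variable {B C : AddSubgroup A}

theorem le_orth_inf_left (hB : B ≤ orth b B) : B ≤ orth b (B ⊓ C) :=
  hB.trans (orth_antitone inf_le_left)

theorem Ftwo_le_Fone (hB : B ≤ orth b B) : Ftwo b B C ≤ Fone b B C :=
  AddSubgroup.map_mono <| AddSubgroup.addSubgroupOf_mono _ <|
    inf_le_inf_right C (orth_antitone (le_orth_inf_left hB))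

theorem nonempty_quotient_Fone_addEquiv_range (hB : B ≤ orth b B) :
    Nonempty (((↥(orth b B) ⧸ B.addSubgroupOf (orth b B)) ⧸ Fone b B C) ≃+
      ↥(natMap b B C).range) := by
  refine nonempty_addEquiv_of_surjective ((QuotientAddGroup.mk' _).comp (QuotientAddGroup.mk' _))
    (natMap b B C).rangeRestrict
    ((QuotientAddGroup.mk'_surjective _).comp (QuotientAddGroup.mk'_surjective _))
    (natMap b B C).rangeRestrict_surjective fun x => ?_
  have hmod : (orth b B ⊓ C) ⊔ B = (B ⊔ C) ⊓ orth b B := by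
    rw [sup_inf_assoc_of_le C hB, inf_comm, sup_comm]
  calc _ ↔ (x : ↥(orth b B) ⧸ B.addSubgroupOf (orth b B)) ∈ Fone b B C :=
        QuotientAddGroup.eq_zero_iff _
    _ ↔ (x : A) ∈ (orth b B ⊓ C) ⊔ B := mk_mem_map_addSubgroupOf_iff hB x
    _ ↔ (x : A) ∈ B ⊔ C := by simp only [hmod, AddSubgroup.mem_inf, x.2, and_true]
    _ ↔ natMap b B C x = 0 := (mk_eq_zero_iff (H := B ⊔ C)
        (AddSubgroup.inclusion (orth_antitone (b := b) (inf_le_left : B ⊓ C ≤ B)) x)).symm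
    _ ↔ _ := by rw [Subtype.ext_iff]; rfl

theorem mem_orth_orth_inf_sup_iff (hrefl : ∀ x y, b x y = 0 → b y x = 0) {x : A} (hx : x ∈ C) :
    x ∈ (orth b (orth b (B ⊓ C)) ⊓ C) ⊔ B ↔ x ∈ orth b (orth b (B ⊓ C)) := by
  have hmod : ((orth b (orth b (B ⊓ C)) ⊓ C) ⊔ B) ⊓ C = orth b (orth b (B ⊓ C)) ⊓ C := by
    rw [sup_inf_assoc_of_le B inf_le_right, sup_eq_left]
    exact le_inf (le_orth_orth hrefl _) inf_le_right
  simpa [hx] using congrArg (x ∈ ·) hmod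

theorem nonempty_quotient_Ftwo_addEquiv_hom (hrefl : ∀ x y, b x y = 0 → b y x = 0)
    (hB : B ≤ orth b B) (hC : C ≤ orth b C)
    (hα : Function.Surjective ⇑(mapToHom b C C (fun c hc _ hx => hC hx c hc)))
    (hres : Function.Surjective fun f : (A ⧸ (B ⊔ C)) →+ N =>
      f.comp (QuotientAddGroup.map ((B ⊔ C).addSubgroupOf (orth b (B ⊓ C))) (B ⊔ C)
        (orth b (B ⊓ C)).subtype (fun _ hx => hx))) :
    Nonempty ((↥(Fone b B C) ⧸ (Ftwo b B C).addSubgroupOf (Fone b B C)) ≃+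
      ((↥(orth b (B ⊓ C)) ⧸ (B ⊔ C).addSubgroupOf (orth b (B ⊓ C))) →+ N)) := by
  have hS : ∀ c ∈ orth b B ⊓ C, ∀ x ∈ B ⊔ C, b x c = 0 := fun c hc x hx =>
    (sup_le (fun y hy => hrefl _ _ (hc.1 y hy)) (fun y hy => hC hy c hc.2) :
      B ⊔ C ≤ (b.flip c).ker) hx
  let ψ := (QuotientAddGroup.map ((B ⊔ C).addSubgroupOf (orth b (B ⊓ C))) (B ⊔ C)
    (orth b (B ⊓ C)).subtype (fun x hx => hx)).compHom'.comp (mapToHom b _ _ hS)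
  have hψ : Function.Surjective ψ := hres.comp <|
    mapToHom_surjective hrefl hα le_sup_right (inf_le_inf_right C (orth_antitone le_sup_left)) hS
  refine nonempty_addEquiv_of_surjective
    ((QuotientAddGroup.mk' _).comp (toImage B (inf_le_left : orth b B ⊓ C ≤ orth b B))) ψ
    ((QuotientAddGroup.mk'_surjective _).comp (toImage_surjective _)) hψ fun x => ?_
  calc _ ↔ ((toImage B inf_le_left x : ↥(orth b B) ⧸ B.addSubgroupOf (orth b B))) ∈ Ftwo b B C :=
        (QuotientAddGroup.eq_zero_iff _).trans AddSubgroup.mem_addSubgroupOf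
    _ ↔ (x : A) ∈ (orth b (orth b (B ⊓ C)) ⊓ C) ⊔ B := mk_mem_map_addSubgroupOf_iff hB _
    _ ↔ (x : A) ∈ orth b (orth b (B ⊓ C)) := mem_orth_orth_inf_sup_iff hrefl x.2.2
    _ ↔ ∀ a : orth b (B ⊓ C), b a x = 0 :=
        ⟨fun hx a => hrefl _ _ (hx a a.2), fun hx a ha => hrefl _ _ (hx ⟨a, ha⟩)⟩
    _ ↔ ψ x = 0 := by
        rw [DFunLike.ext_iff, QuotientAddGroup.mk_surjective.forall]
        rfl

theorem nonempty_Ftwo_addEquiv_quotient_range (hrefl : ∀ x y, b x y = 0 → b y x = 0)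
    (hB : B ≤ orth b B) (hC : C ≤ orth b C)
    (hα : Function.Bijective ⇑(mapToHom b C C (fun c hc _ hx => hC hx c hc))) :
    Nonempty (↥(Ftwo b B C) ≃+
      (((A ⧸ orth b (B ⊓ C)) →+ N) ⧸
        (mapToHom b (B ⊓ C) (orth b (B ⊓ C)) (fun c hc _ hx => hx c hc)).range)) := by
  have hS : ∀ c ∈ orth b (orth b (B ⊓ C)) ⊓ C, ∀ x ∈ orth b (B ⊓ C), b x c = 0 :=
    fun c hc x hx => hrefl _ _ (hc.1 x hx)
  have hSK : orth b (orth b (B ⊓ C)) ⊓ C ≤ orth b B :=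
    inf_le_left.trans (orth_antitone (le_orth_inf_left hB))
  refine nonempty_addEquiv_of_surjective (toImage B hSK)
    ((QuotientAddGroup.mk' _).comp (mapToHom b _ _ hS)) (toImage_surjective hSK)
    ((QuotientAddGroup.mk'_surjective _).comp <|
      mapToHom_surjective hrefl hα.2 (hC.trans (orth_antitone inf_le_right)) le_rfl hS)
    fun x => ?_
  calc _ ↔ (x : A) ∈ B := toImage_eq_zero_iff hSK x
    _ ↔ (x : A) ∈ B ⊓ C := AddSubgroup.mem_inf.trans (and_iff_left x.2.2) |>.symm
    _ ↔ _ := ((mapToHom_mem_range_iff hα.1 inf_le_right inf_le_right _ _ x).symm.trans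
        (QuotientAddGroup.eq_zero_iff _).symm)

end Filtration

/-- Proposition 2.1: let `(·,·) : A × A → N` be a (anti)symmetric bilinear pairing on an abelian
group, `B, C ⊆ A` isotropic subgroups and `A' = (B ∩ C)^⊥`.  Suppose (i) the map
`α : C → Hom(A/C, N)`, `c ↦ ([a] ↦ (a,c))`, is an isomorphism, and (ii) the restriction map
`Hom(A/(B+C), N) → Hom(A'/(B+C), N)` is surjective.  Let `F¹, F²` be the images in `B^⊥/B` of
`B^⊥ ∩ C` and `A'^⊥ ∩ C` respectively.  Then `F² ⊆ F¹`, `(B^⊥/B)/F¹` is isomorphic to the image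
of the natural map `B^⊥ → A'/(B+C)`, `F¹/F²` is isomorphic to `Hom(A'/(B+C), N)`, and `F²` is
isomorphic to the cokernel of `β : B ∩ C → Hom(A/A', N)`, `c ↦ ([a] ↦ (a,c))`. -/
theorem filtration_on_orthogonal_quotient (b : A →+ A →+ N) (B C : AddSubgroup A)
    (hsym : (∀ x y : A, b x y = b y x) ∨ (∀ x y : A, b x y = - b y x))
    (hB : B ≤ orth b B) (hC : C ≤ orth b C)
    (hα : Function.Bijective ⇑(mapToHom b C C (fun c hc x hx => hC hx c hc)))
    (hres : Function.Surjective fun f : (A ⧸ (B ⊔ C)) →+ N =>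
      f.comp (QuotientAddGroup.map ((B ⊔ C).addSubgroupOf (orth b (B ⊓ C))) (B ⊔ C)
        (orth b (B ⊓ C)).subtype (fun x hx => hx))) :
    Ftwo b B C ≤ Fone b B C ∧
    Nonempty (((↥(orth b B) ⧸ B.addSubgroupOf (orth b B)) ⧸ Fone b B C) ≃+
      ↥(natMap b B C).range) ∧
    Nonempty ((↥(Fone b B C) ⧸ (Ftwo b B C).addSubgroupOf (Fone b B C)) ≃+
      ((↥(orth b (B ⊓ C)) ⧸ (B ⊔ C).addSubgroupOf (orth b (B ⊓ C))) →+ N)) ∧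
    Nonempty (↥(Ftwo b B C) ≃+
      (((A ⧸ orth b (B ⊓ C)) →+ N) ⧸
        (mapToHom b (B ⊓ C) (orth b (B ⊓ C)) (fun c hc x hx => hx c hc)).range)) := by
  have hrefl : ∀ x y, b x y = 0 → b y x = 0 := fun _ _ => eq_zero_comm_of_symm_or_antisymm hsym
  exact ⟨Ftwo_le_Fone hB, nonempty_quotient_Fone_addEquiv_range hB,
    nonempty_quotient_Ftwo_addEquiv_hom hrefl hB hC hα.2 hres,
    nonempty_Ftwo_addEquiv_quotient_range hrefl hB hC hα⟩
end OrthPairing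
end

section
/- Suppose the map α: C → Hom(A/C, N), c ↦ ([a] ↦ (a,c)), is a group isomorphism. Then the map c ↦ ([a] ↦ (a,c)) restricts to an isomorphism of B^⊥ ∩ C onto Hom(A/(B+C), N) and to an isomorphism of A'^⊥ ∩ C onto Hom(A/A', N). -/
namespace OrthPairing

variable {A N : Type*} [AddCommGroup A] [AddCommGroup N]

lemma pair_eq_zero_of_sup {b : A →+ A →+ N} {B C : AddSubgroup A}
    (hsym : (∀ x y : A, b x y = b y x) ∨ (∀ x y : A, b x y = - b y x))
    (hC : C ≤ orth b C) :
    ∀ c ∈ orth b B ⊓ C, ∀ x ∈ B ⊔ C, b x c = 0 := by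
  intro c hc x hx
  rcases AddSubgroup.mem_sup.mp hx with ⟨y, hy, z, hz, rfl⟩
  have hyc : b y c = 0 := by
    rcases hsym with h | h
    · rw [h]; exact hc.1 y hy
    · rw [h, hc.1 y hy, neg_zero]
  have hzc : b z c = 0 := hC hz c hc.2
  simp [hyc, hzc]

lemma pair_eq_zero_of_orth_orth {b : A →+ A →+ N} {B C : AddSubgroup A}
    (hsym : (∀ x y : A, b x y = b y x) ∨ (∀ x y : A, b x y = - b y x)) :
    ∀ c ∈ orth b (orth b (B ⊓ C)) ⊓ C, ∀ x ∈ orth b (B ⊓ C), b x c = 0 := by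
  intro c hc x hx
  rcases hsym with h | h
  · rw [h]; exact hc.1 x hx
  · rw [h, hc.1 x hx, neg_zero]

lemma key (b : A →+ A →+ N) (C D P : AddSubgroup A)
    (hsym : (∀ x y : A, b x y = b y x) ∨ (∀ x y : A, b x y = - b y x))
    (hC : C ≤ orth b C)
    (hα : Function.Bijective ⇑(mapToHom b C C (fun c hc x hx => hC hx c hc)))
    (hCD : C ≤ D)
    (hP : ∀ c : A, c ∈ P ↔ c ∈ C ∧ ∀ e ∈ D, b c e = 0)
    (h : ∀ c ∈ P, ∀ x ∈ D, b x c = 0) :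
    Function.Bijective ⇑(mapToHom b P D h) := by
  constructor
  · intro c c' hcc'
    have hall : ∀ a : A, b a (c : A) = b a (c' : A) := by
      intro a
      have := congrArg (fun f => f (QuotientAddGroup.mk a)) hcc'
      exact this
    have : (⟨c.1, ((hP c).mp c.2).1⟩ : C) = ⟨c'.1, ((hP c').mp c'.2).1⟩ := by
      apply hα.1
      refine DFunLike.ext _ _ fun q => QuotientAddGroup.induction_on q fun a => ?_
      exact hall a
    have hcv : (c : A) = (c' : A) := congrArg (fun x : C => (x : A)) this
    exact Subtype.ext hcv
  · intro f
    obtain ⟨c, hc⟩ := hα.2 (f.comp (QuotientAddGroup.map C D (AddMonoidHom.id A) hCD))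
    have hval : ∀ a : A, b a (c : A) = f (QuotientAddGroup.mk a) := by
      intro a
      have := congrArg (fun g => g (QuotientAddGroup.mk a)) hc
      exact this
    have hcP : (c : A) ∈ P := by
      rw [hP]
      refine ⟨c.2, fun e he => ?_⟩
      have h1 : b e (c : A) = 0 := by
        rw [hval e, (QuotientAddGroup.eq_zero_iff e).mpr he, map_zero]
      rcases hsym with hs | hs
      · rw [hs]; exact h1
      · rw [hs, h1, neg_zero]
    refine ⟨⟨c, hcP⟩, ?_⟩
    refine DFunLike.ext _ _ fun q => QuotientAddGroup.induction_on q fun a => ?_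
    exact hval a

/-- If the map `α : C → Hom(A/C, N)`, `c ↦ ([a] ↦ (a,c))`, is an isomorphism, then the same
formula `c ↦ ([a] ↦ (a,c))` restricts to an isomorphism of `B^⊥ ∩ C` onto `Hom(A/(B+C), N)`
and to an isomorphism of `A'^⊥ ∩ C` onto `Hom(A/A', N)`, where `A' = (B ∩ C)^⊥`. -/
theorem restricted_pairing_maps_bijective (b : A →+ A →+ N) (B C : AddSubgroup A)
    (hsym : (∀ x y : A, b x y = b y x) ∨ (∀ x y : A, b x y = - b y x))
    (hB : B ≤ orth b B) (hC : C ≤ orth b C)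
    (hα : Function.Bijective ⇑(mapToHom b C C (fun c hc x hx => hC hx c hc))) :
    Function.Bijective
      ⇑(mapToHom b (orth b B ⊓ C) (B ⊔ C) (pair_eq_zero_of_sup hsym hC)) ∧
    Function.Bijective
      ⇑(mapToHom b (orth b (orth b (B ⊓ C)) ⊓ C) (orth b (B ⊓ C))
        (pair_eq_zero_of_orth_orth hsym)) := by
  constructor
  · refine key b C (B ⊔ C) (orth b B ⊓ C) hsym hC hα le_sup_right (fun c => ?_) _
    constructor
    · rintro ⟨hcB, hcC⟩
      refine ⟨hcC, fun e he => ?_⟩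
      rcases AddSubgroup.mem_sup.mp he with ⟨y, hy, z, hz, rfl⟩
      simp [hcB y hy, hC hcC z hz]
    · rintro ⟨hcC, hall⟩
      exact ⟨fun e he => hall e (AddSubgroup.mem_sup_left he), hcC⟩
  · refine key b C (orth b (B ⊓ C)) (orth b (orth b (B ⊓ C)) ⊓ C) hsym hC hα
      (fun c hcC e he => hC hcC e he.2) (fun c => ?_) _
    exact ⟨fun hc => ⟨hc.2, hc.1⟩, fun hc => ⟨hc.2, hc.1⟩⟩

end OrthPairing
end

section
/- Suppose that (i) the map α: C → Hom(A/C, N), c ↦ ([a] ↦ (a,c)), is a group isomorphism, and (ii) the pairing (B ∩ C) × A/(B+C) → N induced by (·,·) is unimodular. Then B = B^⊥. -/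
/-!
Let `a ∈ B^⊥`. Since `a` pairs trivially with `B ∩ C`, injectivity of `A/(B+C) → Hom(B ∩ C, N)`
puts `a` in `B + C`, say `a = u + v` with `u ∈ B`, `v ∈ C`. Then `v ∈ B^⊥`, so by (anti)symmetry
`(·, v)` kills `B + C`; surjectivity of `B ∩ C → Hom(A/(B+C), N)` gives `c ∈ B ∩ C` with
`(·, c) = (·, v)`, and injectivity of `α` forces `v = c ∈ B`.
-/

namespace OrthPairing

variable {A N : Type*} [AddCommGroup A] [AddCommGroup N]

/-- The map `A → Hom(E, N)`, `a ↦ (c ↦ (a, c))`. -/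
def toHomOnSub (b : A →+ A →+ N) (E : AddSubgroup A) : A →+ ↥E →+ N where
  toFun a := (b a).comp E.subtype
  map_zero' := by ext c; simp
  map_add' x y := by ext c; simp

/-- The map `A/D → Hom(E, N)`, `[a] ↦ (c ↦ (a, c))`, defined whenever `(x, c) = 0`
for all `x ∈ D` and `c ∈ E`. -/
def quotToHomOnSub (b : A →+ A →+ N) (E D : AddSubgroup A)
    (h : ∀ c ∈ E, ∀ x ∈ D, b x c = 0) : (A ⧸ D) →+ ↥E →+ N :=
  QuotientAddGroup.lift D (toHomOnSub b E)
    (fun x hx => AddMonoidHom.ext fun c => h c c.2 x hx)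

lemma pair_eq_zero_of_isotropic {b : A →+ A →+ N} {B C : AddSubgroup A}
    (hB : B ≤ orth b B) (hC : C ≤ orth b C) :
    ∀ c ∈ B ⊓ C, ∀ x ∈ B ⊔ C, b x c = 0 := by
  intro c hc x hx
  rcases AddSubgroup.mem_sup.mp hx with ⟨y, hy, z, hz, rfl⟩
  have hyc : b y c = 0 := hB hy c hc.1
  have hzc : b z c = 0 := hC hz c hc.2
  simp [hyc, hzc]

section Lemmas

variable {b : A →+ A →+ N}

lemma orth_anti {E F : AddSubgroup A} (hEF : E ≤ F) : orth b F ≤ orth b E :=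
  fun _ ha e he => ha e (hEF he)

lemma eq_zero_comm (hsym : (∀ x y : A, b x y = b y x) ∨ (∀ x y : A, b x y = - b y x))
    {x y : A} : b x y = 0 ↔ b y x = 0 := by
  rcases hsym with hs | hs
  · rw [hs]
  · rw [hs, neg_eq_zero]

lemma orth_le_of_injective {E D : AddSubgroup A} {h : ∀ c ∈ E, ∀ x ∈ D, b x c = 0}
    (hinj : Function.Injective (quotToHomOnSub b E D h)) : orth b E ≤ D := by
  intro a ha
  rw [← QuotientAddGroup.eq_zero_iff]
  refine hinj ((AddMonoidHom.ext fun c => ?_).trans (map_zero _).symm)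
  exact ha c c.2

lemma eq_of_injective {C D : AddSubgroup A} {h : ∀ c ∈ C, ∀ x ∈ D, b x c = 0}
    (hinj : Function.Injective (mapToHom b C D h)) {c c' : C}
    (hcc' : ∀ x, b x c = b x c') : c = c' :=
  hinj <| AddMonoidHom.ext fun q => QuotientAddGroup.induction_on q hcc'

lemma exists_eq_of_surjective {E D : AddSubgroup A} {h : ∀ c ∈ E, ∀ x ∈ D, b x c = 0}
    (hsurj : Function.Surjective (mapToHom b E D h)) {v : A} (hv : D ≤ (b.flip v).ker) :
    ∃ c : E, ∀ x, b x c = b x v := by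
  obtain ⟨c, hc⟩ := hsurj (QuotientAddGroup.lift D (b.flip v) hv)
  exact ⟨c, fun x => DFunLike.congr_fun hc (x : A ⧸ D)⟩

end Lemmas

/-- Corollary 2.2: let `(·,·) : A × A → N` be a (anti)symmetric bilinear pairing and
`B, C ⊆ A` isotropic subgroups.  Suppose (i) the map `α : C → Hom(A/C, N)`,
`c ↦ ([a] ↦ (a,c))`, is an isomorphism, and (ii) the induced pairing
`(B ∩ C) × A/(B+C) → N` is unimodular.  Then `B = B^⊥`. -/
theorem eq_orth_of_unimodular (b : A →+ A →+ N) (B C : AddSubgroup A)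
    (hsym : (∀ x y : A, b x y = b y x) ∨ (∀ x y : A, b x y = - b y x))
    (hB : B ≤ orth b B) (hC : C ≤ orth b C)
    (hα : Function.Bijective ⇑(mapToHom b C C (fun c hc x hx => hC hx c hc)))
    (huni₁ : Function.Bijective
      ⇑(mapToHom b (B ⊓ C) (B ⊔ C) (pair_eq_zero_of_isotropic hB hC)))
    (huni₂ : Function.Bijective
      ⇑(quotToHomOnSub b (B ⊓ C) (B ⊔ C)
        (fun c hc x hx => pair_eq_zero_of_isotropic hB hC c hc x hx))) :
    B = orth b B := by
  refine le_antisymm hB fun a ha => ?_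
  obtain ⟨u, hu, v, hv, rfl⟩ :=
    AddSubgroup.mem_sup.mp (orth_le_of_injective huni₂.injective (orth_anti inf_le_left ha))
  have hBv : B ≤ (b.flip v).ker := fun y hy => by
    have : b (u + v) y = 0 := ha y hy
    rw [map_add, AddMonoidHom.add_apply, hB hu y hy, zero_add] at this
    exact (eq_zero_comm hsym).mp this
  have hCv : C ≤ (b.flip v).ker := fun z hz => hC hz v hv
  obtain ⟨c, hc⟩ := exists_eq_of_surjective huni₁.surjective (sup_le hBv hCv)
  have hcv : (⟨c, c.2.2⟩ : C) = ⟨v, hv⟩ := eq_of_injective hα.injective hc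
  simp only [Subtype.mk.injEq] at hcv
  have hvB : v ∈ B := hcv ▸ c.2.1
  exact B.add_mem hu hvB

end OrthPairing
end

section
/- Suppose that (i) the map α: C → Hom(A/C, N), c ↦ ([a] ↦ (a,c)), is a group isomorphism, and (ii) the subgroup A' ⊆ A has a complement, i.e., there is a subgroup D ⊆ A with A' ∩ D = 0 and A' + D = A. Then the natural map C → Hom(A'/C, N), c ↦ ([a] ↦ (a,c)) (well defined since C is isotropic and C ⊆ A'), is surjective. -/
/-! A homomorphism `A'/C → N` extends to `A/C → N` by composing with the projection of `A`
onto `A'` along the complement `D`; by (i) that extension is `(·, c)` for some `c ∈ C`, and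
restricting back to `A'/C` recovers the original homomorphism. -/

namespace OrthPairing

variable {A N : Type*} [AddCommGroup A] [AddCommGroup N]

/-- The map `C → Hom(A'/C, N)`, `c ↦ ([a] ↦ (a, c))`, for subgroups `C ⊆ A'` of `A`,
defined whenever `(x, c) = 0` for all `x, c ∈ C` (e.g. when `C` is isotropic). -/
def mapToHomSub (b : A →+ A →+ N) (C A' : AddSubgroup A)
    (h : ∀ c ∈ C, ∀ x : ↥A', (x : A) ∈ C → b x c = 0) :
    ↥C →+ (↥A' ⧸ C.addSubgroupOf A') →+ N where
  toFun c := QuotientAddGroup.lift (C.addSubgroupOf A')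
    ((b.flip (c : A)).comp A'.subtype) (fun x hx => h c c.2 x hx)
  map_zero' := AddMonoidHom.ext fun q =>
    QuotientAddGroup.induction_on q (fun a => by simp)
  map_add' x y := AddMonoidHom.ext fun q =>
    QuotientAddGroup.induction_on q (fun a => by simp; rfl)

theorem exists_comp_subtype_eq_of_isCompl {A' D : AddSubgroup A} (h : IsCompl A' D)
    (f : A' →+ N) :
    ∃ g : A →+ N, g.comp A'.subtype = f := by
  let p := Submodule.projectionOnto _ _ (AddSubgroup.toIntSubmodule.isCompl h)
  exact ⟨f.comp p.toAddMonoidHom, AddMonoidHom.ext fun x =>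
    congrArg f (Submodule.projectionOnto_apply_left (p := A'.toIntSubmodule) _ ⟨x, x.2⟩)⟩

theorem exists_comp_quotientMap_eq_of_isCompl {C A' D : AddSubgroup A} (hCA' : C ≤ A')
    (h : IsCompl A' D) (f : A' ⧸ C.addSubgroupOf A' →+ N) :
    ∃ g : A ⧸ C →+ N, g.comp (QuotientAddGroup.map _ C A'.subtype le_rfl) = f := by
  obtain ⟨g, hg⟩ := exists_comp_subtype_eq_of_isCompl h (f.comp (QuotientAddGroup.mk' _))
  have hgC : C ≤ g.ker := fun c hc => by
    rw [AddMonoidHom.mem_ker, ← show A'.subtype ⟨c, hCA' hc⟩ = c from rfl,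
      ← AddMonoidHom.comp_apply, hg]
    exact (congrArg f ((QuotientAddGroup.eq_zero_iff _).mpr hc)).trans f.map_zero
  refine ⟨QuotientAddGroup.lift C g hgC, ?_⟩
  ext x
  exact DFunLike.congr_fun hg x

theorem mapToHomSub_eq_comp (b : A →+ A →+ N) (C A' : AddSubgroup A)
    (h : ∀ c ∈ C, ∀ x ∈ C, b x c = 0) (c : C) :
    mapToHomSub b C A' (fun c hc x hx => h c hc x hx) c =
      (mapToHom b C C h c).comp (QuotientAddGroup.map _ C A'.subtype le_rfl) := by
  ext; rfl

theorem map_to_hom_quotient_surjective_general (b : A →+ A →+ N) (B C : AddSubgroup A)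
    (hC : C ≤ orth b C)
    (hα : Function.Bijective ⇑(mapToHom b C C (fun c hc x hx => hC hx c hc)))
    (hcompl : ∃ D : AddSubgroup A,
      orth b (B ⊓ C) ⊓ D = ⊥ ∧ orth b (B ⊓ C) ⊔ D = ⊤) :
    Function.Surjective
      ⇑(mapToHomSub b C (orth b (B ⊓ C)) (fun c hc x hx => hC hx c hc)) := by
  obtain ⟨D, hinf, hsup⟩ := hcompl
  have hCA' : C ≤ orth b (B ⊓ C) := fun c hc e he => hC hc e he.2
  intro f
  obtain ⟨g, rfl⟩ := exists_comp_quotientMap_eq_of_isCompl hCA'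
    ⟨disjoint_iff.mpr hinf, codisjoint_iff.mpr hsup⟩ f
  obtain ⟨c, rfl⟩ := hα.2 g
  exact ⟨c, mapToHomSub_eq_comp b C _ _ c⟩

/-- Suppose (i) the map `α : C → Hom(A/C, N)`, `c ↦ ([a] ↦ (a,c))`, is an isomorphism, and
(ii) the subgroup `A' = (B ∩ C)^⊥` of `A` has a complement.  Then the natural map
`C → Hom(A'/C, N)`, `c ↦ ([a] ↦ (a,c))`, is surjective. -/
theorem map_to_hom_quotient_surjective (b : A →+ A →+ N) (B C : AddSubgroup A)
    (hsym : (∀ x y : A, b x y = b y x) ∨ (∀ x y : A, b x y = - b y x))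
    (hB : B ≤ orth b B) (hC : C ≤ orth b C)
    (hα : Function.Bijective ⇑(mapToHom b C C (fun c hc x hx => hC hx c hc)))
    (hcompl : ∃ D : AddSubgroup A,
      orth b (B ⊓ C) ⊓ D = ⊥ ∧ orth b (B ⊓ C) ⊔ D = ⊤) :
    Function.Surjective
      ⇑(mapToHomSub b C (orth b (B ⊓ C)) (fun c hc x hx => hC hx c hc)) :=
  map_to_hom_quotient_surjective_general b B C hC hα hcompl

end OrthPairing
end

section
/- Suppose that (i) the map α: C → Hom(A/C, N), c ↦ ([a] ↦ (a,c)), is a group isomorphism, and (ii) the subgroup A' ⊆ A has a complement, i.e., there is a subgroup D ⊆ A with A' ∩ D = 0 and A' + D = A. Then for any a ∈ A', the class [a] ∈ A'/(B+C) lies in the image of the natural map B^⊥ → A'/(B+C) if and only if the homomorphism λ_a: B/(B∩C) → N, [b] ↦ (a,b), extends to a group homomorphism A'/C → N, i.e., there exists a homomorphism h: A'/C → N with h([b]) = (a,b) for all b ∈ B. -/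
/-!
`[a]` lies in the image of `B^⊥` exactly when `(a, ·)` agrees on `B` with `(c, ·)` for some
`c ∈ C`: write `a = y + u + c` with `y ∈ B^⊥`, `u ∈ B`, and use that `B` is isotropic. As `C` is
isotropic, `(c, ·)` is a homomorphism `A'/C → N`. Conversely, an extension of `λ_a` to `A'/C`
extends further to `A/C` by projecting onto `A'` along its complement; surjectivity of `α` writes
it as `(·, c₀)`, and (anti)symmetry turns this into `(±c₀, ·)`.
-/

namespace OrthPairing

variable {A N : Type*} [AddCommGroup A] [AddCommGroup N]

theorem _root_.AddSubgroup.exists_addMonoidHom_extend_of_isCompl {A' D : AddSubgroup A}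
    (hA'D : IsCompl A' D) (f : A' →+ N) : ∃ F : A →+ N, ∀ x : A', F x = f x :=
  have hIs := AddSubgroup.toIntSubmodule.isCompl hA'D
  ⟨f.comp (Submodule.projectionOnto _ _ hIs).toAddMonoidHom,
    fun x => congrArg f (Submodule.projectionOnto_apply_left hIs x)⟩

section

variable {b : A →+ A →+ N} {B C : AddSubgroup A}

theorem natMap_eq_mk_iff (y : orth b B) (a : orth b (B ⊓ C)) :
    natMap b B C y = QuotientAddGroup.mk' _ a ↔ (a : A) - y ∈ B ⊔ C := by
  rw [natMap, AddMonoidHom.comp_apply, QuotientAddGroup.mk'_apply, QuotientAddGroup.mk'_apply,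
    QuotientAddGroup.eq, AddSubgroup.mem_addSubgroupOf, neg_add_eq_sub]
  rfl

theorem mk_mem_range_natMap_iff (hB : B ≤ orth b B) (a : orth b (B ⊓ C)) :
    QuotientAddGroup.mk' _ a ∈ (natMap b B C).range ↔ ∃ c ∈ C, ∀ x ∈ B, b a x = b c x := by
  constructor
  · rintro ⟨y, hya⟩
    obtain ⟨u, hu, c, hc, huc⟩ := AddSubgroup.mem_sup.mp ((natMap_eq_mk_iff y a).mp hya)
    refine ⟨c, hc, fun x hx => ?_⟩
    rw [show (a : A) = y + u + c by rw [add_assoc, huc]; abel, map_add, map_add,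
      AddMonoidHom.add_apply, AddMonoidHom.add_apply, y.2 x hx, hB hu x hx, zero_add, zero_add]
  · rintro ⟨c, hc, hac⟩
    have hy : (a : A) - c ∈ orth b B := fun x hx => by
      rw [map_sub, AddMonoidHom.sub_apply, hac x hx, sub_self]
    refine ⟨⟨_, hy⟩, (natMap_eq_mk_iff _ a).mpr ?_⟩
    rw [sub_sub_cancel]
    exact AddSubgroup.mem_sup_right hc

theorem exists_lift_pairing (hC : C ≤ orth b C) {A' : AddSubgroup A} {c : A} (hc : c ∈ C) :
    ∃ h : A' ⧸ C.addSubgroupOf A' →+ N, ∀ x : A', h (QuotientAddGroup.mk x) = b c x :=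
  ⟨QuotientAddGroup.lift _ ((b c).comp A'.subtype)
    fun x hx => hC hc x (AddSubgroup.mem_addSubgroupOf.mp hx), fun _ => rfl⟩

theorem exists_pairing_right_eq_of_surjective {D : AddSubgroup A}
    {hCD : ∀ c ∈ C, ∀ x ∈ D, b x c = 0} (hα : Function.Surjective (mapToHom b C D hCD))
    (F : A →+ N) (hF : ∀ x ∈ D, F x = 0) : ∃ c ∈ C, ∀ x, b x c = F x := by
  obtain ⟨c, hc⟩ := hα (QuotientAddGroup.lift D F hF)
  exact ⟨c, c.2, fun x => DFunLike.congr_fun hc (QuotientAddGroup.mk x)⟩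

theorem exists_pairing_left_eq_of_pairing_right_eq
    (hsym : (∀ x y : A, b x y = b y x) ∨ (∀ x y : A, b x y = - b y x))
    {F : A →+ N} {c : A} (hc : c ∈ C) (hcF : ∀ x, b x c = F x) :
    ∃ c' ∈ C, ∀ x, b c' x = F x := by
  rcases hsym with hs | hs
  · exact ⟨c, hc, fun x => (hs c x).trans (hcF x)⟩
  · refine ⟨-c, neg_mem hc, fun x => ?_⟩
    rw [map_neg, AddMonoidHom.neg_apply, hs, neg_neg, hcF]

end

/-- Suppose (i) the map `α : C → Hom(A/C, N)`, `c ↦ ([a] ↦ (a,c))`, is an isomorphism, and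
(ii) the subgroup `A' = (B ∩ C)^⊥` of `A` has a complement.  Then for any `a ∈ A'`, the class
`[a] ∈ A'/(B+C)` lies in the image of the natural map `B^⊥ → A'/(B+C)` if and only if the
homomorphism `λ_a : B/(B∩C) → N`, `[b] ↦ (a,b)`, extends to a homomorphism `A'/C → N`, i.e.
there is a homomorphism `h : A'/C → N` with `h([b]) = (a,b)` for all `b ∈ B`. -/
theorem mem_image_iff_lambda_extends (b : A →+ A →+ N) (B C : AddSubgroup A)
    (hsym : (∀ x y : A, b x y = b y x) ∨ (∀ x y : A, b x y = - b y x))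
    (hB : B ≤ orth b B) (hC : C ≤ orth b C)
    (hα : Function.Bijective ⇑(mapToHom b C C (fun c hc x hx => hC hx c hc)))
    (hcompl : ∃ D : AddSubgroup A,
      orth b (B ⊓ C) ⊓ D = ⊥ ∧ orth b (B ⊓ C) ⊔ D = ⊤) :
    ∀ a : ↥(orth b (B ⊓ C)),
      (QuotientAddGroup.mk' ((B ⊔ C).addSubgroupOf (orth b (B ⊓ C))) a ∈
          (natMap b B C).range ↔
        ∃ h : (↥(orth b (B ⊓ C)) ⧸ C.addSubgroupOf (orth b (B ⊓ C))) →+ N,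
          ∀ x : ↥(orth b (B ⊓ C)), (x : A) ∈ B →
            h (QuotientAddGroup.mk x) = b (a : A) (x : A)) := by
  intro a
  rw [mk_mem_range_natMap_iff hB]
  constructor
  · rintro ⟨c, hc, hac⟩
    obtain ⟨h, hh⟩ := exists_lift_pairing hC hc
    exact ⟨h, fun x hx => (hh x).trans (hac x hx).symm⟩
  · rintro ⟨h, hh⟩
    obtain ⟨D, hD, hD'⟩ := hcompl
    have hCA' : C ≤ orth b (B ⊓ C) := fun x hx e he => hC hx e he.2
    obtain ⟨F, hF⟩ := AddSubgroup.exists_addMonoidHom_extend_of_isCompl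
      ⟨disjoint_iff.mpr hD, codisjoint_iff.mpr hD'⟩ (h.comp (QuotientAddGroup.mk' _))
    have hFC : ∀ x ∈ C, F x = 0 := fun x hx => by
      rw [hF ⟨x, hCA' hx⟩, AddMonoidHom.comp_apply, QuotientAddGroup.mk'_apply,
        (QuotientAddGroup.eq_zero_iff (N := C.addSubgroupOf _) ⟨x, hCA' hx⟩).mpr hx, map_zero]
    obtain ⟨c₀, hc₀, hc₀F⟩ := exists_pairing_right_eq_of_surjective hα.2 F hFC
    obtain ⟨c, hc, hcF⟩ := exists_pairing_left_eq_of_pairing_right_eq hsym hc₀ hc₀F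
    refine ⟨c, hc, fun x hx => ?_⟩
    have hxA' : x ∈ orth b (B ⊓ C) := fun e he => hB hx e he.1
    rw [hcF, hF ⟨x, hxA'⟩]
    exact (hh ⟨x, hxA'⟩ hx).symm

end OrthPairing
end

section
/- Let k be an infinite field and l a finite field extension of k. Then for f ∈ l((t))^*, one has Nm_{l/k}((f,g)_t) = 1 for all g ∈ l((t))^* if and only if v(f) = 0 and Nm_{l/k}(f(0)) = 1. In other words, the kernel of the pairing l((t))^* × l((t))^* → k^*, (f,g) ↦ Nm_{l/k}((f,g)_t), is the kernel of the composite map l[[t]]^* → l^* → k^*, where the first map sends a unit power series to its constant term and the second map is the norm Nm_{l/k}. -/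
/-!
The series in the definition of the tame symbol has order `0`, and the leading coefficient is
multiplicative, so `(f,g)_t = (-1)^{v(f)v(g)} lc(f)^{-v(g)} lc(g)^{v(f)}`. Pairing `f` with a
constant `c ∈ k^*` gives `Nm(c^{v(f)}) = c^{v(f)[l:k]}`; since an infinite field is not contained
in the roots of a single polynomial `X^n - 1`, this is `1` for all `c` only when `v(f) = 0`.
Pairing with `t` then gives `Nm(f(0))⁻¹`, and conversely `v(f) = 0` makes the symbol
`f(0)^{-v(g)}`.
-/

/-- The tame symbol `(f,g)_t = ((-1)^{v(f)v(g)} f^{-v(g)} g^{v(f)})(0)` of two Laurent series,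
where `v` is the `t`-adic valuation (the order) and `(0)` takes the constant term. -/
noncomputable def tameSymbol {l : Type*} [Field l] (f g : LaurentSeries l) : l :=
  (((-1 : LaurentSeries l) ^ (f.order * g.order)) * f ^ (-g.order) * g ^ f.order).coeff 0

namespace HahnSeries

variable {Γ R : Type*}

section LeadingCoeff

variable [AddCommMonoid Γ] [LinearOrder Γ] [IsOrderedCancelAddMonoid Γ]
  [Semiring R] [NoZeroDivisors R]

noncomputable def leadingCoeffHom : HahnSeries Γ R →*₀ R where
  toFun := leadingCoeff
  map_zero' := leadingCoeff_zero
  map_one' := leadingCoeff_one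
  map_mul' x y := leadingCoeff_mul x y

end LeadingCoeff

theorem coeff_zero_eq_leadingCoeff [Zero Γ] [PartialOrder Γ] [Zero R] {x : HahnSeries Γ R}
    (h : x.order = 0) : x.coeff 0 = x.leadingCoeff := by
  rw [leadingCoeff_eq, h]

variable [AddCommGroup Γ] [LinearOrder Γ] [IsOrderedAddMonoid Γ] [Field R]

theorem leadingCoeff_zpow (x : HahnSeries Γ R) (n : ℤ) :
    (x ^ n).leadingCoeff = x.leadingCoeff ^ n :=
  map_zpow₀ leadingCoeffHom x n

theorem order_inv {x : HahnSeries Γ R} (hx : x ≠ 0) : x⁻¹.order = -x.order := by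
  have h := order_mul hx (inv_ne_zero hx)
  rw [mul_inv_cancel₀ hx, order_one] at h
  rw [eq_neg_iff_add_eq_zero, add_comm, ← h]

theorem order_zpow (x : HahnSeries Γ R) (n : ℤ) : (x ^ n).order = n • x.order := by
  rcases eq_or_ne x 0 with rfl | hx
  · rcases eq_or_ne n 0 with rfl | hn
    · simp
    · simp [zero_zpow n hn]
  induction n using Int.induction_on with
  | zero => simp
  | succ n ih =>
    rw [zpow_add_one₀ hx, order_mul (zpow_ne_zero n hx) hx, ih, add_smul, one_smul]
  | pred n ih =>
    rw [zpow_sub_one₀ hx, order_mul (zpow_ne_zero _ hx) (inv_ne_zero hx), ih, sub_smul, one_smul,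
      sub_eq_add_neg, ← order_inv hx]

end HahnSeries

theorem eq_zero_of_forall_zpow_eq_one {K : Type*} [Field K] [Infinite K] {n : ℤ}
    (h : ∀ x : K, x ≠ 0 → x ^ n = 1) : n = 0 := by
  classical
  by_contra hn
  obtain ⟨x, hx⟩ :=
    Infinite.exists_notMem_finset (insert 0 (Polynomial.nthRootsFinset n.natAbs (1 : K)))
  rw [Finset.mem_insert, Polynomial.mem_nthRootsFinset (Int.natAbs_pos.2 hn), not_or] at hx
  have hu : Units.mk0 x hx.1 ^ n = 1 := Units.ext (by simpa using h x hx.1)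
  exact hx.2 (by simpa using congrArg Units.val (pow_natAbs_eq_one.2 hu))

open HahnSeries

section TameSymbol

variable {l : Type*} [Field l]

theorem tameSymbol_eq_leadingCoeff (f g : LaurentSeries l) :
    tameSymbol f g =
      (-1) ^ (f.order * g.order) * f.leadingCoeff ^ (-g.order) * g.leadingCoeff ^ f.order := by
  set X := (-1 : LaurentSeries l) ^ (f.order * g.order) * f ^ (-g.order) * g ^ f.order with hX
  have hX_order : X.order = 0 := by
    rcases eq_or_ne X 0 with h0 | hne
    · rw [h0, order_zero]
    obtain ⟨⟨hs, hf⟩, hg⟩ := And.imp_left mul_ne_zero_iff.1 (mul_ne_zero_iff.1 hne)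
    rw [hX, order_mul (mul_ne_zero hs hf) hg, order_mul hs hf, order_zpow, order_zpow, order_zpow,
      order_neg, order_one]
    simp only [smul_eq_mul]
    ring
  rw [tameSymbol, ← hX, ← hX_order, ← leadingCoeff_eq]
  simp only [hX, leadingCoeff_mul, leadingCoeff_zpow, leadingCoeff_neg, leadingCoeff_one]

theorem tameSymbol_of_order_eq_zero {f : LaurentSeries l} (hf : f.order = 0) (g : LaurentSeries l) :
    tameSymbol f g = f.coeff 0 ^ (-g.order) := by
  rw [tameSymbol_eq_leadingCoeff, hf, zero_mul, zpow_zero, one_mul, zpow_zero, mul_one,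
    coeff_zero_eq_leadingCoeff hf]

theorem tameSymbol_single_zero (f : LaurentSeries l) {c : l} (hc : c ≠ 0) :
    tameSymbol f (single 0 c) = c ^ f.order := by
  rw [tameSymbol_eq_leadingCoeff, order_single hc, leadingCoeff_of_single, mul_zero, zpow_zero,
    neg_zero, zpow_zero, one_mul, one_mul]

theorem tameSymbol_single_one (f : LaurentSeries l) :
    tameSymbol f (single 1 1) = (-1) ^ f.order * f.leadingCoeff⁻¹ := by
  rw [tameSymbol_eq_leadingCoeff, order_single one_ne_zero, leadingCoeff_of_single, mul_one,
    one_zpow, mul_one, zpow_neg_one]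

end TameSymbol

theorem tame_symbol_kernel_infinite_field_general {k l : Type*} [Field k] [Infinite k] [Field l]
    [Algebra k l] [FiniteDimensional k l] (f : LaurentSeries l) :
    (∀ g : LaurentSeries l, g ≠ 0 → Algebra.norm k (tameSymbol f g) = 1) ↔
      f.order = 0 ∧ Algebra.norm k (f.coeff 0) = 1 := by
  constructor
  · intro H
    have hord : f.order = 0 := by
      suffices f.order * Module.finrank k l = 0 by simpa [Module.finrank_pos.ne'] using this
      refine eq_zero_of_forall_zpow_eq_one (K := k) fun c hc ↦ ?_
      have hc' : algebraMap k l c ≠ 0 := (map_ne_zero _).2 hc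
      have := H (single 0 (algebraMap k l c)) (single_ne_zero hc')
      rwa [tameSymbol_single_zero f hc', ← map_zpow₀, Algebra.norm_algebraMap, ← zpow_natCast,
        ← zpow_mul] at this
    have := H (single 1 1) (single_ne_zero one_ne_zero)
    rw [tameSymbol_single_one, hord, zpow_zero, one_mul, ← coeff_zero_eq_leadingCoeff hord,
      Algebra.norm_inv, inv_eq_one] at this
    exact ⟨hord, this⟩
  · rintro ⟨hord, hnorm⟩ g -
    rw [tameSymbol_of_order_eq_zero hord, Algebra.norm_zpow, hnorm, one_zpow]

/-- Let `k` be an infinite field and `l` a finite field extension of `k`.  For a nonzero Laurent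
series `f ∈ l((t))^*`, one has `Nm_{l/k}((f,g)_t) = 1` for all `g ∈ l((t))^*` if and only if
`v(f) = 0` and `Nm_{l/k}(f(0)) = 1`; i.e. the kernel of the pairing
`l((t))^* × l((t))^* → k^*`, `(f,g) ↦ Nm_{l/k}((f,g)_t)`, is the kernel of the composite
`l[[t]]^* → l^* → k^*` of the constant-term map and the norm map. -/
theorem tame_symbol_kernel_infinite_field {k l : Type*} [Field k] [Infinite k] [Field l]
    [Algebra k l] [FiniteDimensional k l] (f : LaurentSeries l) (hf : f ≠ 0) :
    (∀ g : LaurentSeries l, g ≠ 0 → Algebra.norm k (tameSymbol f g) = 1) ↔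
      f.order = 0 ∧ Algebra.norm k (f.coeff 0) = 1 :=
  tame_symbol_kernel_infinite_field_general f
end

section
/- Let F_q be a finite field with q elements and l a finite field extension of F_q. Then the kernel of the pairing l((t))^* × l((t))^* → F_q^*, (f,g) ↦ Nm_{l/F_q}((f,g)_t), equals the subgroup (l((t))^*)^{q-1} of (q-1)-st powers: for f ∈ l((t))^*, one has Nm_{l/F_q}((f,g)_t) = 1 for all g ∈ l((t))^* if and only if f = h^{q-1} for some h ∈ l((t))^*. -/
namespace TameSymbolAux

section Laurent

variable {l : Type*} [Field l]

lemma lc_mul {f g : LaurentSeries l} (hf : f ≠ 0) (hg : g ≠ 0) :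
    (f*g).leadingCoeff = f.leadingCoeff * g.leadingCoeff := by
  rw [HahnSeries.leadingCoeff_eq, HahnSeries.order_mul hf hg, HahnSeries.coeff_mul_order_add_order]

lemma order_inv' {f : LaurentSeries l} (hf : f ≠ 0) : (f⁻¹).order = -f.order := by
  have h1 : f⁻¹ * f = 1 := inv_mul_cancel₀ hf
  have h2 : (f⁻¹ * f).order = 0 := by rw [h1, HahnSeries.order_one]
  rw [HahnSeries.order_mul (inv_ne_zero hf) hf] at h2
  omega

lemma lc_inv' {f : LaurentSeries l} (hf : f ≠ 0) : (f⁻¹).leadingCoeff = f.leadingCoeff⁻¹ := by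
  have h1 : f⁻¹ * f = 1 := inv_mul_cancel₀ hf
  have h2 : (f⁻¹ * f).leadingCoeff = 1 := by rw [h1, HahnSeries.leadingCoeff_one]
  rw [lc_mul (inv_ne_zero hf) hf] at h2
  exact eq_inv_of_mul_eq_one_left h2

lemma lc_npow {f : LaurentSeries l} (n : ℕ) : (f^n).leadingCoeff = f.leadingCoeff ^ n := by
  rcases eq_or_ne f 0 with rfl | hf
  · rcases Nat.eq_zero_or_pos n with rfl | hn
    · simp [HahnSeries.leadingCoeff_one]
    · simp [zero_pow hn.ne', HahnSeries.leadingCoeff_zero]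
  induction n with
  | zero => simp [HahnSeries.leadingCoeff_one]
  | succ k ih => rw [pow_succ, pow_succ, lc_mul (pow_ne_zero _ hf) hf, ih]

lemma order_zpow {f : LaurentSeries l} (hf : f ≠ 0) (n : ℤ) : (f ^ n).order = n * f.order := by
  cases n with
  | ofNat k => rw [Int.ofNat_eq_natCast, zpow_natCast, HahnSeries.order_pow]; simp
  | negSucc k =>
      rw [zpow_negSucc, order_inv' (pow_ne_zero _ hf), HahnSeries.order_pow,
        Int.negSucc_eq]
      ring

lemma lc_zpow {f : LaurentSeries l} (hf : f ≠ 0) (n : ℤ) :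
    (f ^ n).leadingCoeff = f.leadingCoeff ^ n := by
  cases n with
  | ofNat k => rw [Int.ofNat_eq_natCast, zpow_natCast, zpow_natCast, lc_npow]
  | negSucc k => rw [zpow_negSucc, zpow_negSucc, lc_inv' (pow_ne_zero _ hf), lc_npow]

lemma neg_one_order : ((-1 : LaurentSeries l)).order = 0 := by
  rw [HahnSeries.order_neg, HahnSeries.order_one]

lemma neg_one_lc : ((-1 : LaurentSeries l)).leadingCoeff = -1 := by
  rw [HahnSeries.leadingCoeff_eq, neg_one_order, HahnSeries.coeff_neg]
  have : (1 : LaurentSeries l).coeff 0 = 1 := by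
    rw [← HahnSeries.order_one (Γ := ℤ) (R := l), ← HahnSeries.leadingCoeff_eq,
      HahnSeries.leadingCoeff_one]
  rw [this]

lemma tameSymbol_eq {f g : LaurentSeries l} (hf : f ≠ 0) (hg : g ≠ 0) :
    tameSymbol f g =
      (-1 : l) ^ (f.order * g.order) * f.leadingCoeff ^ (-g.order)
        * g.leadingCoeff ^ f.order := by
  have hne : (-1 : LaurentSeries l) ≠ 0 := by simp
  have h1 : ((-1 : LaurentSeries l) ^ (f.order * g.order)) ≠ 0 := zpow_ne_zero _ hne
  have h2 : f ^ (-g.order) ≠ 0 := zpow_ne_zero _ hf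
  have h3 : g ^ f.order ≠ 0 := zpow_ne_zero _ hg
  set u := ((-1 : LaurentSeries l) ^ (f.order * g.order)) * f ^ (-g.order) * g ^ f.order with hu
  have horder : u.order = 0 := by
    rw [hu, HahnSeries.order_mul (mul_ne_zero h1 h2) h3, HahnSeries.order_mul h1 h2,
      order_zpow hne, order_zpow hf, order_zpow hg, neg_one_order]
    ring
  have : tameSymbol f g = u.coeff u.order := by rw [horder]; rfl
  rw [this, ← HahnSeries.leadingCoeff_eq, hu, lc_mul (mul_ne_zero h1 h2) h3,
    lc_mul h1 h2, lc_zpow hne, lc_zpow hf, lc_zpow hg, neg_one_lc]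

end Laurent

section Hensel

open PowerSeries

variable {l : Type*} [Field l]

lemma span_X_pow_smul_top (n : ℕ) :
    ((Ideal.span {(X : PowerSeries l)}) ^ n • ⊤ : Ideal (PowerSeries l)) =
      Ideal.span {(X : PowerSeries l) ^ n} := by
  rw [← Ideal.one_eq_top, Ideal.smul_eq_mul, mul_one, Ideal.span_singleton_pow]

lemma powerSeries_isAdicComplete :
    IsAdicComplete (Ideal.span {(X : PowerSeries l)}) (PowerSeries l) := by
  refine { haus' := ?_, prec' := ?_ }
  · intro x hx
    ext j
    have h := hx (j + 1)
    rw [SModEq.zero] at h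
    have h2 : (X : PowerSeries l) ^ (j+1) ∣ x := by
      rw [← Ideal.mem_span_singleton, ← span_X_pow_smul_top]
      exact h
    rw [PowerSeries.X_pow_dvd_iff] at h2
    simpa using h2 j (by omega)
  · intro f hf
    refine ⟨PowerSeries.mk fun j => coeff j (f (j+1)), fun n => ?_⟩
    rw [SModEq.sub_mem, span_X_pow_smul_top, Ideal.mem_span_singleton,
      PowerSeries.X_pow_dvd_iff]
    intro j hj
    have h := hf (show j + 1 ≤ n by omega)
    rw [SModEq.sub_mem, span_X_pow_smul_top, Ideal.mem_span_singleton,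
      PowerSeries.X_pow_dvd_iff] at h
    have h2 := h j (by omega)
    rw [map_sub] at h2 ⊢
    rw [coeff_mk]
    rw [sub_eq_zero] at h2 ⊢
    exact h2.symm

/-- Existence of `n`-th roots of power series with constant coefficient 1,
when `n` is invertible. -/
lemma exists_pow_root (n : ℕ) (hn : (n : l) ≠ 0) (V : PowerSeries l)
    (hV : constantCoeff V = 1) : ∃ r : PowerSeries l, r ^ n = V := by
  haveI := powerSeries_isAdicComplete (l := l)
  haveI : HenselianRing (PowerSeries l) (Ideal.span {(X : PowerSeries l)}) :=
    IsAdicComplete.henselianRing _ _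
  have hn0 : n ≠ 0 := by rintro rfl; simp at hn
  obtain ⟨a, ha, -⟩ := HenselianRing.is_henselian
    (Polynomial.X ^ n - Polynomial.C V) (Polynomial.monic_X_pow_sub_C V hn0) 1
    (by
      rw [Ideal.mem_span_singleton, PowerSeries.X_dvd_iff]
      simp [hV])
    (by
      have hunit : IsUnit ((n : PowerSeries l)) := by
        rw [PowerSeries.isUnit_iff_constantCoeff]
        simp only [map_natCast]
        exact (isUnit_iff_ne_zero).mpr hn
      have : (Polynomial.X ^ n - Polynomial.C V :
          Polynomial (PowerSeries l)).derivative.eval 1 = (n : PowerSeries l) := by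
        simp [Polynomial.derivative_X_pow]
      rw [this]
      exact hunit.map _)
  refine ⟨a, ?_⟩
  have h := ha
  simp only [Polynomial.IsRoot, Polynomial.eval_sub, Polynomial.eval_pow, Polynomial.eval_X,
    Polynomial.eval_C, sub_eq_zero] at h
  exact h

end Hensel

section Norm

variable {Fq l : Type*} [Field Fq] [Fintype Fq] [Field l] [Algebra Fq l] [FiniteDimensional Fq l]

lemma exists_frobenius_algEquiv :
    ∃ σ : l ≃ₐ[Fq] l, ∀ x : l, σ x = x ^ Fintype.card Fq := by
  obtain ⟨p, hp⟩ := CharP.exists Fq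
  haveI : CharP Fq p := hp
  haveI : CharP l p := charP_of_injective_algebraMap (algebraMap Fq l).injective p
  obtain ⟨n, hprime, hcard⟩ := FiniteField.card Fq p
  haveI : Fact p.Prime := ⟨hprime⟩
  haveI : Finite l := Module.finite_of_finite Fq
  have hinj : Function.Injective (iterateFrobenius l p n) := by
    rw [coe_iterateFrobenius]
    exact Function.Injective.iterate (frobenius_inj l p) n
  let e : l ≃+* l := RingEquiv.ofBijective (iterateFrobenius l p n)
    (Finite.injective_iff_bijective.mp hinj)
  have he : ∀ x : l, e x = x ^ Fintype.card Fq := by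
    intro x
    show iterateFrobenius l p n x = _
    rw [iterateFrobenius_def, hcard]
  refine ⟨AlgEquiv.ofRingEquiv (f := e) ?_, fun x => he x⟩
  intro x
  rw [he, ← map_pow, FiniteField.pow_card]

lemma norm_eq_pow_sum (x : l) :
    algebraMap Fq l (Algebra.norm Fq x) =
      x ^ (∑ i ∈ Finset.range (Module.finrank Fq l), Fintype.card Fq ^ i) := by
  obtain ⟨σ, hσ⟩ := exists_frobenius_algEquiv (Fq := Fq) (l := l)
  haveI : Finite l := Module.finite_of_finite Fq
  haveI : Fintype l := Fintype.ofFinite l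
  classical
  set q := Fintype.card Fq with hq
  set d := Module.finrank Fq l with hd
  have hpow : ∀ (i : ℕ) (x : l), (σ ^ i) x = x ^ q ^ i := by
    intro i
    induction i with
    | zero => intro x; simp
    | succ k ih =>
        intro x
        rw [pow_succ, AlgEquiv.mul_apply, hσ, ih, ← pow_mul, pow_succ]
        ring_nf
  have hcardG : Fintype.card (l ≃ₐ[Fq] l) = d := by rw [← Nat.card_eq_fintype_card]; exact IsGalois.card_aut_eq_finrank Fq l
  have hq1 : 1 < q := Fintype.one_lt_card
  have hdpos : 0 < d := Module.finrank_pos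
  have horder : orderOf σ = d := by
    have h1 : orderOf σ ∣ d := hcardG ▸ orderOf_dvd_card
    have hjpos : 0 < orderOf σ := orderOf_pos σ
    obtain ⟨ζ, hζ⟩ := IsCyclic.exists_generator (α := lˣ)
    have hζord : orderOf ζ = Fintype.card l - 1 := by
      rw [orderOf_eq_card_of_forall_mem_zpowers hζ, Nat.card_eq_fintype_card,
        Fintype.card_units]
    have hz : (ζ : l) ^ q ^ orderOf σ = (ζ : l) := by
      have h2 : (σ ^ orderOf σ) (ζ : l) = (ζ : l) := by
        rw [pow_orderOf_eq_one σ]; rfl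
      rwa [hpow] at h2
    have hone : 1 < q ^ orderOf σ := one_lt_pow₀ hq1 hjpos.ne'
    have hzu : ζ ^ q ^ orderOf σ = ζ := by
      apply Units.ext; push_cast; exact hz
    have hz2 : ζ ^ (q ^ orderOf σ - 1) = 1 := by
      have h3 : ζ ^ (q ^ orderOf σ - 1) * ζ = 1 * ζ := by
        rw [one_mul, ← pow_succ, Nat.sub_add_cancel hone.le, hzu]
      exact mul_right_cancel h3
    have hdvd : orderOf ζ ∣ q ^ orderOf σ - 1 := orderOf_dvd_of_pow_eq_one hz2
    have hle : Fintype.card l - 1 ≤ q ^ orderOf σ - 1 := by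
      rw [← hζord]
      exact Nat.le_of_dvd (by omega) hdvd
    have hNl : Fintype.card l = q ^ d := Module.card_eq_pow_finrank
    have hcl : 1 ≤ Fintype.card l := Fintype.card_pos
    have : q ^ d ≤ q ^ orderOf σ := by omega
    have h2 : d ≤ orderOf σ := (Nat.pow_le_pow_iff_right hq1).mp this
    exact le_antisymm (Nat.le_of_dvd hdpos h1) h2
  have hbij : Function.Bijective (fun i : Fin d => σ ^ (i : ℕ)) := by
    rw [Fintype.bijective_iff_injective_and_card]
    refine ⟨?_, by simp [hcardG]⟩
    intro i j hij
    have h5 := pow_eq_pow_iff_modEq.mp hij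
    rw [horder] at h5
    have h6 : (i : ℕ) % d = (j : ℕ) % d := h5
    rw [Nat.mod_eq_of_lt i.2, Nat.mod_eq_of_lt j.2] at h6
    exact Fin.ext h6
  rw [Algebra.norm_eq_prod_automorphisms,
    ← Fintype.prod_bijective _ hbij (fun i => (σ ^ (i : ℕ)) x) (fun τ => τ x) (fun i => rfl)]
  simp_rw [hpow]
  rw [Finset.prod_pow_eq_pow_sum Finset.univ (fun i : Fin d => q ^ (i:ℕ)) x]
  congr 1
  exact Fin.sum_univ_eq_sum_range (fun i => q ^ i) d

lemma card_sub_one_cast_ne_zero : ((Fintype.card Fq - 1 : ℕ) : l) ≠ 0 := by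
  obtain ⟨p, hp⟩ := CharP.exists Fq
  haveI : CharP Fq p := hp
  haveI : CharP l p := charP_of_injective_algebraMap (algebraMap Fq l).injective p
  obtain ⟨v, hprime, hcard⟩ := FiniteField.card Fq p
  have hp0 : (p : l) = 0 := CharP.cast_eq_zero l p
  have h1 : ((Fintype.card Fq : ℕ) : l) = 0 := by
    rw [hcard]
    push_cast
    rw [hp0]
    exact zero_pow (by exact_mod_cast v.ne_zero)
  have hq1 : 1 ≤ Fintype.card Fq := Fintype.card_pos
  rw [Nat.cast_sub hq1, h1, Nat.cast_one, zero_sub]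
  exact neg_ne_zero.mpr one_ne_zero

end Norm

lemma geom_aux (q d : ℕ) : q * (∑ i ∈ Finset.range d, (q + 1) ^ i) + 1 = (q + 1) ^ d := by
  induction d with
  | zero => simp
  | succ k ih =>
      rw [Finset.sum_range_succ, Nat.mul_add, pow_succ]
      nlinarith [ih]

end TameSymbolAux

open TameSymbolAux in
/-- Let `F_q` be a finite field with `q` elements and `l` a finite field extension of `F_q`.
The kernel of the pairing `l((t))^* × l((t))^* → F_q^*`, `(f,g) ↦ Nm_{l/F_q}((f,g)_t)`,
is the subgroup of `(q-1)`-st powers: for nonzero `f`, `Nm_{l/F_q}((f,g)_t) = 1` for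
all nonzero `g` if and only if `f = h^{q-1}` for some nonzero `h`. -/
theorem tame_symbol_kernel_finite_field {Fq l : Type*} [Field Fq] [Fintype Fq] [Field l]
    [Algebra Fq l] [FiniteDimensional Fq l] (f : LaurentSeries l) (hf : f ≠ 0) :
    (∀ g : LaurentSeries l, g ≠ 0 → Algebra.norm Fq (tameSymbol f g) = 1) ↔
      ∃ h : LaurentSeries l, h ≠ 0 ∧ h ^ (Fintype.card Fq - 1) = f := by
  classical
  haveI : Finite l := Module.finite_of_finite Fq
  haveI : Fintype l := Fintype.ofFinite l
  set q := Fintype.card Fq with hqdef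
  set d := Module.finrank Fq l with hddef
  set m := ∑ i ∈ Finset.range d, q ^ i with hmdef
  have hq1 : 1 < q := Fintype.one_lt_card
  have hdpos : 0 < d := Module.finrank_pos
  have hgeom : (q - 1) * m + 1 = q ^ d := by
    obtain ⟨q', hq'⟩ : ∃ q', q = q' + 1 := ⟨q - 1, by omega⟩
    rw [hmdef, hq']
    simp only [Nat.add_sub_cancel]
    exact geom_aux q' d
  have hNl : Fintype.card l = q ^ d := Module.card_eq_pow_finrank
  have hmpos : 0 < m := by
    rcases Nat.eq_zero_or_pos m with hm0 | hm
    · rw [hm0, Nat.mul_zero, zero_add] at hgeom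
      have : 1 < q ^ d := one_lt_pow₀ hq1 hdpos.ne'
      omega
    · exact hm
  have hnorm_iff : ∀ x : l, (Algebra.norm Fq x = 1 ↔ x ^ m = 1) := by
    intro x
    constructor
    · intro h
      have := norm_eq_pow_sum (Fq := Fq) x
      rw [h, map_one] at this
      exact this.symm
    · intro h
      apply (algebraMap Fq l).injective
      rw [norm_eq_pow_sum, map_one, h]
  have hcf : f.leadingCoeff ≠ 0 := HahnSeries.leadingCoeff_ne_zero.mpr hf
  have hq1l : ((q - 1 : ℕ) : l) ≠ 0 := card_sub_one_cast_ne_zero (Fq := Fq)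
  have hm1 : (-1 : l) ^ (q - 1) = 1 := by
    have hFq : (-1 : Fq) ^ (q - 1) = 1 :=
      FiniteField.pow_card_sub_one_eq_one (-1) (neg_ne_zero.mpr one_ne_zero)
    calc (-1 : l) ^ (q - 1) = algebraMap Fq l ((-1 : Fq) ^ (q - 1)) := by
          rw [map_pow, map_neg, map_one]
      _ = 1 := by rw [hFq, map_one]
  constructor
  · intro hker
    obtain ⟨ζ, hζ⟩ := IsCyclic.exists_generator (α := lˣ)
    have hζord : orderOf ζ = q ^ d - 1 := by
      rw [orderOf_eq_card_of_forall_mem_zpowers hζ, Nat.card_eq_fintype_card,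
        Fintype.card_units, hNl]
    have hgz : ((ζ : l)) ≠ 0 := Units.ne_zero ζ
    -- step 1 : (q-1) ∣ order f
    have h1 := hker (HahnSeries.single (0 : ℤ) (ζ : l)) (HahnSeries.single_ne_zero hgz)
    rw [tameSymbol_eq hf (HahnSeries.single_ne_zero hgz), HahnSeries.order_single hgz,
      HahnSeries.leadingCoeff_of_single] at h1
    simp only [mul_zero, zpow_zero, one_mul, neg_zero, mul_one] at h1
    rw [hnorm_iff] at h1
    have hu : ζ ^ (f.order * (m : ℤ)) = 1 := by
      apply Units.ext
      rw [Units.val_zpow_eq_zpow_val, zpow_mul, zpow_natCast, Units.val_one]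
      exact h1
    have hdvd0 : ((orderOf ζ : ℤ)) ∣ f.order * (m : ℤ) := orderOf_dvd_iff_zpow_eq_one.mpr hu
    rw [hζord] at hdvd0
    have hqd : (q ^ d - 1 : ℕ) = (q - 1) * m := by omega
    rw [hqd, Nat.cast_mul] at hdvd0
    have hdvd : ((q - 1 : ℕ) : ℤ) ∣ f.order := by
      have hm0 : ((m : ℕ) : ℤ) ≠ 0 := by exact_mod_cast hmpos.ne'
      exact (mul_dvd_mul_iff_right hm0).mp hdvd0
    -- step 2 : leadingCoeff f has norm 1
    have h2 := hker (HahnSeries.single (1 : ℤ) (1 : l)) (HahnSeries.single_ne_zero one_ne_zero)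
    rw [tameSymbol_eq hf (HahnSeries.single_ne_zero one_ne_zero),
      HahnSeries.order_single one_ne_zero, HahnSeries.leadingCoeff_of_single] at h2
    simp only [mul_one, one_zpow] at h2
    have hneg : (-1 : l) ^ f.order = 1 := by
      obtain ⟨k0, hk0⟩ := hdvd
      rw [hk0, zpow_mul, zpow_natCast, hm1, one_zpow]
    rw [hneg, one_mul, zpow_neg, zpow_one] at h2
    rw [hnorm_iff, inv_pow, inv_eq_one] at h2
    -- extract (q-1)-st root of leading coefficient
    obtain ⟨j, hj0⟩ := (mem_powers_iff_mem_zpowers).mpr (hζ (Units.mk0 f.leadingCoeff hcf))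
    have hj : ζ ^ j = Units.mk0 f.leadingCoeff hcf := hj0
    have hjm : ζ ^ (j * m) = 1 := by
      rw [pow_mul, hj]
      apply Units.ext
      push_cast
      exact h2
    have hdvdj : (q - 1) ∣ j := by
      have := orderOf_dvd_of_pow_eq_one hjm
      rw [hζord, hqd] at this
      exact (Nat.mul_dvd_mul_iff_right hmpos).mp this
    obtain ⟨s, hs⟩ := hdvdj
    have he : ((ζ ^ s : lˣ) : l) ^ (q - 1) = f.leadingCoeff := by
      have : (ζ ^ s) ^ (q - 1) = Units.mk0 f.leadingCoeff hcf := by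
        rw [← pow_mul, mul_comm s (q-1), ← hs, hj]
      calc ((ζ ^ s : lˣ) : l) ^ (q - 1) = (((ζ ^ s) ^ (q - 1) : lˣ) : l) := by push_cast; ring
        _ = f.leadingCoeff := by rw [this]; rfl
    -- Hensel
    set U := f.powerSeriesPart with hUdef
    have hU0 : PowerSeries.constantCoeff U = f.leadingCoeff := by
      rw [← PowerSeries.coeff_zero_eq_constantCoeff_apply, hUdef,
        LaurentSeries.powerSeriesPart_coeff, Nat.cast_zero, add_zero, ← HahnSeries.leadingCoeff_eq]
    set V := PowerSeries.C (f.leadingCoeff)⁻¹ * U with hVdef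
    have hV : PowerSeries.constantCoeff V = 1 := by
      rw [hVdef, map_mul, PowerSeries.constantCoeff_C, hU0, inv_mul_cancel₀ hcf]
    obtain ⟨r, hr⟩ := exists_pow_root (q - 1) hq1l V hV
    have hVne : V ≠ 0 := by
      intro h0
      rw [h0, map_zero] at hV
      exact zero_ne_one hV
    have hrne : r ≠ 0 := by
      intro h0
      rw [h0, zero_pow (by omega : q - 1 ≠ 0)] at hr
      exact hVne hr.symm
    obtain ⟨k, hk⟩ := hdvd
    refine ⟨HahnSeries.single k ((ζ ^ s : lˣ) : l) * HahnSeries.ofPowerSeries ℤ l r, ?_, ?_⟩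
    · exact mul_ne_zero (HahnSeries.single_ne_zero (Units.ne_zero _))
        ((map_ne_zero_iff _ HahnSeries.ofPowerSeries_injective).mpr hrne)
    · rw [mul_pow, HahnSeries.single_pow, ← map_pow, hr, he]
      have hsm : ((q - 1) • k : ℤ) = f.order := by
        rw [nsmul_eq_mul, ← hk]
      rw [hsm, hVdef, map_mul, HahnSeries.ofPowerSeries_C]
      have hC : (HahnSeries.C (f.leadingCoeff⁻¹) : LaurentSeries l)
          = HahnSeries.single (0 : ℤ) (f.leadingCoeff⁻¹) := rfl
      rw [hC, ← mul_assoc, HahnSeries.single_mul_single, add_zero,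
        mul_inv_cancel₀ hcf]
      exact f.single_order_mul_powerSeriesPart
  · rintro ⟨h, hh0, rfl⟩
    intro g hg
    have hfne : h ^ (q - 1) ≠ 0 := pow_ne_zero _ hh0
    have hlch : h.leadingCoeff ≠ 0 := HahnSeries.leadingCoeff_ne_zero.mpr hh0
    have hlcg : g.leadingCoeff ≠ 0 := HahnSeries.leadingCoeff_ne_zero.mpr hg
    rw [tameSymbol_eq hfne hg, hnorm_iff]
    rw [HahnSeries.order_pow, lc_npow]
    set A := h.order
    set B := g.order
    set y : l := (-1 : l) ^ (A * B) * h.leadingCoeff ^ (-B) * g.leadingCoeff ^ A with hydef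
    have hyne : y ≠ 0 := by
      refine mul_ne_zero (mul_ne_zero ?_ ?_) ?_
      · exact zpow_ne_zero _ (neg_ne_zero.mpr one_ne_zero)
      · exact zpow_ne_zero _ hlch
      · exact zpow_ne_zero _ hlcg
    have hsm : ((q - 1) • A : ℤ) = ((q - 1 : ℕ) : ℤ) * A := nsmul_eq_mul _ _
    have key : ((-1 : l) ^ (((q - 1) • A : ℤ) * B) * (h.leadingCoeff ^ (q - 1)) ^ (-B)
        * g.leadingCoeff ^ ((q - 1) • A : ℤ)) = y ^ (q - 1) := by
      rw [hsm, hydef]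
      rw [mul_pow, mul_pow]
      rw [← zpow_natCast ((-1 : l) ^ (A * B)) (q - 1), ← zpow_mul]
      rw [← zpow_natCast (h.leadingCoeff ^ (-B)) (q - 1), ← zpow_mul]
      rw [← zpow_natCast (g.leadingCoeff ^ A) (q - 1), ← zpow_mul]
      rw [← zpow_natCast h.leadingCoeff (q - 1), ← zpow_mul]
      congr 1
      · congr 1
        · congr 1
          ring
        · congr 1
          ring
      · congr 1
        ring
    rw [key, ← pow_mul]
    have hexp : (q - 1) * m = Fintype.card l - 1 := by
      rw [hNl]; omega
    rw [hexp]
    exact FiniteField.pow_card_sub_one_eq_one y hyne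
end

section
/- Let n be a positive integer, N a cyclic group of order n, M a finite abelian group annihilated by n, and b: M × M → N a unimodular bilinear pairing. Let ψ: M → M be a group endomorphism that is an isometry for b, i.e., b(ψ(x), ψ(y)) = b(x,y) for all x, y ∈ M. Then the pairing Ker(ψ − id) × M/Im(ψ − id) → N, (x, [z]) ↦ b(x, z), is well defined (b(x,z) depends only on the class of z modulo Im(ψ − id) when ψ(x) = x) and is unimodular, i.e., it induces isomorphisms Ker(ψ − id) ≅ Hom(M/Im(ψ − id), N) and M/Im(ψ − id) ≅ Hom(Ker(ψ − id), N). -/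
/-!
Write `K = Ker(ψ - id)` and `I = Im(ψ - id)`. A fixed point `x` of `ψ` is orthogonal to
`ψ w - w`, since `b(x, ψ w) = b(ψ x, ψ w) = b(x, w)`; so `b` induces a pairing `K × M/I → N`,
injective on the left because `b` is. The first isomorphism theorem for `ψ - id` gives
`|K| = |M/I|`, and a finite group killed by `n` has exactly as many characters into `N` as
elements, so the left map `K → Hom(M/I, N)` is bijective. As characters separate points, the
right map is injective, and counting once more makes it bijective.
-/

open Function

lemma hasEnoughRootsOfUnity_multiplicative_of_isAddCyclic {N : Type*} [AddCommGroup N] {n : ℕ}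
    (hn : 0 < n) (hNcyc : IsAddCyclic N) (hNcard : Nat.card N = n) :
    HasEnoughRootsOfUnity (Multiplicative N) n := by
  have : Finite N := Nat.finite_of_card_ne_zero (by omega)
  obtain ⟨g, hg⟩ := IsCyclic.exists_generator (α := Multiplicative N)
  have hg_order : orderOf g = n := (orderOf_eq_card_of_forall_mem_zpowers hg).trans hNcard
  have : IsCyclic (Multiplicative N)ˣ := isCyclic_of_surjective _ toUnits.surjective
  exact ⟨⟨g, hg_order ▸ IsPrimitiveRoot.orderOf g⟩, inferInstance⟩

/-- The form in which Mathlib's duality theory for finite abelian groups applies to `A →+ N`. -/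
def addMonoidHomEquivMonoidHomUnits (A N : Type*) [AddCommGroup A] [AddCommGroup N] :
    (A →+ N) ≃ (Multiplicative A →* (Multiplicative N)ˣ) :=
  AddMonoidHom.toMultiplicative.trans (MulEquiv.monoidHomCongrRight toUnits).toEquiv

section Duality

variable {A N : Type*} [AddCommGroup A] [AddCommGroup N] {n : ℕ} [NeZero n]
  [HasEnoughRootsOfUnity (Multiplicative N) n]

lemma hasEnoughRootsOfUnity_exponent_of_nsmul_eq_zero (hA : ∀ a : A, n • a = 0) :
    HasEnoughRootsOfUnity (Multiplicative N) (Monoid.exponent (Multiplicative A)) :=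
  .of_dvd _ (Monoid.exponent_dvd_of_forall_pow_eq_one fun a ↦ hA a.toAdd)

variable [Finite A]

lemma card_addMonoidHom_of_nsmul_eq_zero (hA : ∀ a : A, n • a = 0) :
    Nat.card (A →+ N) = Nat.card A := by
  have := hasEnoughRootsOfUnity_exponent_of_nsmul_eq_zero (N := N) hA
  rw [Nat.card_congr (addMonoidHomEquivMonoidHomUnits A N),
    CommGroup.card_monoidHom_of_hasEnoughRootsOfUnity]
  rfl

lemma exists_addMonoidHom_apply_ne_zero_of_nsmul_eq_zero (hA : ∀ a : A, n • a = 0) {a : A}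
    (ha : a ≠ 0) : ∃ φ : A →+ N, φ a ≠ 0 := by
  have := hasEnoughRootsOfUnity_exponent_of_nsmul_eq_zero (N := N) hA
  obtain ⟨χ, hχ⟩ := CommGroup.exists_apply_ne_one_of_hasEnoughRootsOfUnity (Multiplicative A)
    (Multiplicative N) (a := Multiplicative.ofAdd a) ha
  obtain ⟨φ, rfl⟩ := (addMonoidHomEquivMonoidHomUnits A N).surjective χ
  refine ⟨φ, fun h ↦ hχ ?_⟩
  change toUnits (Multiplicative.ofAdd (φ a)) = 1
  rw [h, ofAdd_zero, map_one]

end Duality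

theorem AddMonoidHom.bijective_and_bijective_flip_of_injective {A B N : Type*} [AddCommGroup A]
    [AddCommGroup B] [AddCommGroup N] [Finite A] [Finite B] {n : ℕ} [NeZero n]
    [HasEnoughRootsOfUnity (Multiplicative N) n] (hA : ∀ a : A, n • a = 0)
    (hB : ∀ b : B, n • b = 0) (P : A →+ B →+ N) (hP : Injective P)
    (hcard : Nat.card A = Nat.card B) : Bijective P ∧ Bijective P.flip := by
  have hcardA := card_addMonoidHom_of_nsmul_eq_zero (N := N) hA
  have hcardB := card_addMonoidHom_of_nsmul_eq_zero (N := N) hB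
  have : Finite (A →+ N) := Nat.finite_of_card_ne_zero (hcardA ▸ Nat.card_pos.ne')
  have : Finite (B →+ N) := Nat.finite_of_card_ne_zero (hcardB ▸ Nat.card_pos.ne')
  have hP_bij : Bijective P :=
    (Nat.bijective_iff_injective_and_card P).mpr ⟨hP, hcard.trans hcardB.symm⟩
  -- every character of `B` is of the form `P a`, and characters separate the points of `B`
  have hP_flip : Injective P.flip := by
    refine (injective_iff_map_eq_zero _).mpr fun q hq ↦ ?_
    by_contra hq_ne
    obtain ⟨φ, hφ⟩ := exists_addMonoidHom_apply_ne_zero_of_nsmul_eq_zero (N := N) hB hq_ne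
    obtain ⟨a, rfl⟩ := hP_bij.surjective φ
    exact hφ (DFunLike.congr_fun hq a)
  exact ⟨hP_bij,
    (Nat.bijective_iff_injective_and_card _).mpr ⟨hP_flip, hcard.symm.trans hcardA.symm⟩⟩

section QuotientPairing

variable {M M' N : Type*} [AddCommGroup M] [AddCommGroup M'] [AddCommGroup N]
  (b : M →+ M' →+ N) (K : AddSubgroup M) (I : AddSubgroup M') (h : ∀ x ∈ K, ∀ z ∈ I, b x z = 0)

def AddMonoidHom.restrictQuotient : K →+ (M' ⧸ I) →+ N :=
  AddMonoidHom.mk' (fun x ↦ QuotientAddGroup.lift I (b x) (h x x.2)) fun x y ↦ by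
    ext z
    exact DFunLike.congr_fun (map_add b (x : M) y) z

lemma AddMonoidHom.restrictQuotient_injective (hb : Injective b) :
    Injective (b.restrictQuotient K I h) := fun _ _ hxy ↦
  Subtype.ext <| hb <| AddMonoidHom.ext fun z ↦ DFunLike.congr_fun hxy (z : M' ⧸ I)

end QuotientPairing

lemma AddMonoidHom.card_ker_eq_card_quotient_range {M : Type*} [AddCommGroup M] [Finite M]
    (f : M →+ M) : Nat.card f.ker = Nat.card (M ⧸ f.range) := by
  have h := f.ker.card_mul_index.trans f.range.card_mul_index.symm
  rw [AddSubgroup.index_ker, mul_comm, AddSubgroup.index_eq_card] at h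
  exact Nat.eq_of_mul_eq_mul_left Nat.card_pos h

lemma apply_eq_zero_of_mem_ker_sub_id_of_mem_range_sub_id {M N : Type*} [AddCommGroup M]
    [AddCommGroup N] (b : M →+ M →+ N) (ψ : M →+ M) (hψ : ∀ x y : M, b (ψ x) (ψ y) = b x y)
    {x z : M} (hx : x ∈ (ψ - AddMonoidHom.id M).ker) (hz : z ∈ (ψ - AddMonoidHom.id M).range) :
    b x z = 0 := by
  obtain ⟨w, rfl⟩ := hz
  have hψx : ψ x = x := sub_eq_zero.mp hx
  have hψw := hψ x w
  rw [hψx] at hψw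
  simp [hψw]

theorem unimodular_pairing_ker_coker_general {M N : Type*} [AddCommGroup M] [AddCommGroup N]
    [Finite M] (n : ℕ) (hn : 0 < n) (hNcyc : IsAddCyclic N) (hNcard : Nat.card N = n)
    (hM : ∀ x : M, n • x = 0)
    (b : M →+ M →+ N)
    (hb : Function.Bijective ⇑b)
    (ψ : M →+ M) (hψ : ∀ x y : M, b (ψ x) (ψ y) = b x y) :
    (∀ x ∈ (ψ - AddMonoidHom.id M).ker, ∀ z z' : M,
        z - z' ∈ (ψ - AddMonoidHom.id M).range → b x z = b x z') ∧
    ∃ P : ↥(ψ - AddMonoidHom.id M).ker →+ (M ⧸ (ψ - AddMonoidHom.id M).range) →+ N,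
      (∀ (x : ↥(ψ - AddMonoidHom.id M).ker) (z : M),
          P x (QuotientAddGroup.mk z) = b x z) ∧
      Function.Bijective ⇑P ∧ Function.Bijective ⇑P.flip := by
  set f := ψ - AddMonoidHom.id M
  have horth : ∀ x ∈ f.ker, ∀ z ∈ f.range, b x z = 0 := fun x hx z hz ↦
    apply_eq_zero_of_mem_ker_sub_id_of_mem_range_sub_id b ψ hψ hx hz
  have : NeZero n := ⟨hn.ne'⟩
  have := hasEnoughRootsOfUnity_multiplicative_of_isAddCyclic hn hNcyc hNcard
  have hK : ∀ x : f.ker, n • x = 0 := fun x ↦ Subtype.ext (hM x)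
  have hQ : ∀ q : M ⧸ f.range, n • q = 0 := fun q ↦ QuotientAddGroup.induction_on q fun z ↦ by
    rw [← QuotientAddGroup.mk_nsmul, hM, QuotientAddGroup.mk_zero]
  refine ⟨fun x hx z z' hz ↦ sub_eq_zero.mp ?_, b.restrictQuotient f.ker f.range horth,
    fun _ _ ↦ rfl, ?_⟩
  · rw [← map_sub]
    exact horth x hx _ hz
  exact (b.restrictQuotient f.ker f.range horth).bijective_and_bijective_flip_of_injective hK hQ
    (b.restrictQuotient_injective _ _ _ hb.injective) f.card_ker_eq_card_quotient_range

/-- Let `n` be a positive integer, `N` a cyclic group of order `n`, `M` a finite abelian group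
annihilated by `n`, and `b : M × M → N` a unimodular bilinear pairing.  If `ψ : M → M` is a group
endomorphism which is an isometry for `b`, then the pairing
`Ker(ψ - id) × M/Im(ψ - id) → N, (x, [z]) ↦ b(x, z)` is well defined and unimodular. -/
theorem unimodular_pairing_ker_coker {M N : Type*} [AddCommGroup M] [AddCommGroup N]
    [Finite M] (n : ℕ) (hn : 0 < n) (hNcyc : IsAddCyclic N) (hNcard : Nat.card N = n)
    (hM : ∀ x : M, n • x = 0)
    (b : M →+ M →+ N)
    (hb : Function.Bijective ⇑b) (hb' : Function.Bijective ⇑b.flip)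
    (ψ : M →+ M) (hψ : ∀ x y : M, b (ψ x) (ψ y) = b x y) :
    (∀ x ∈ (ψ - AddMonoidHom.id M).ker, ∀ z z' : M,
        z - z' ∈ (ψ - AddMonoidHom.id M).range → b x z = b x z') ∧
    ∃ P : ↥(ψ - AddMonoidHom.id M).ker →+ (M ⧸ (ψ - AddMonoidHom.id M).range) →+ N,
      (∀ (x : ↥(ψ - AddMonoidHom.id M).ker) (z : M),
          P x (QuotientAddGroup.mk z) = b x z) ∧
      Function.Bijective ⇑P ∧ Function.Bijective ⇑P.flip :=
  unimodular_pairing_ker_coker_general n hn hNcyc hNcard hM b hb ψ hψ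
end
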